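/- Let B be a symmetric linear map on ℝ^{n+1} with an orthonormal eigenbasis e_i, Be_i = μ_i e_i, and suppose there is a function f : S^n → ℝ such that for all i ≠ j, μ_j³ − μ_i³ − 3μ_i(μ_j² − μ_i²) = (μ_j − μ_i)·f(e_i). If B has three pairwise distinct eigenvalues μ_i, μ_j, μ_k, then a contradiction follows; hence B has at most two distinct eigenvalues. -/

import Mathlib

/-!
Since `b³ - a³ - 3a(b² - a²) = (b - a)(b² - 2ab - 2a²)`, the hypothesis determines
`f i = μ j² - 2 μ i μ j - 2 μ i²` whenever `μ i ≠ μ j`. If `μ` took three distinct values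
`μ i, μ j, μ k`, comparing the two values of `f i` would force `μ j + μ k = 2 μ i`, and
comparing those of `f j` would force `μ i + μ k = 2 μ j`; together these give `μ i = μ j`.
-/

section

variable {R : Type*} [CommRing R] [IsDomain R]

lemma eq_of_cube_sub_eq_mul {a b x : R} (hab : a ≠ b)
    (h : b ^ 3 - a ^ 3 - 3 * a * (b ^ 2 - a ^ 2) = (b - a) * x) :
    x = b ^ 2 - 2 * a * b - 2 * a ^ 2 :=
  mul_left_cancel₀ (sub_ne_zero.mpr hab.symm) (by rw [← h]; ring)

lemma add_eq_two_mul_of_sq_sub_eq {a b c : R} (hbc : b ≠ c)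
    (h : b ^ 2 - 2 * a * b = c ^ 2 - 2 * a * c) : b + c = 2 * a :=
  mul_left_cancel₀ (sub_ne_zero.mpr hbc) (by linear_combination h)

end

/-- If real numbers `μ i` (the eigenvalues of `B`) admit a function `f` such that
`μ j ³ - μ i ³ - 3 μ i (μ j ² - μ i ²) = (μ j - μ i) * f i` for all `i ≠ j`, then the
`μ i` take at most two distinct values. -/
theorem stmt_6 {n : ℕ} (μ : Fin (n + 1) → ℝ) (f : Fin (n + 1) → ℝ)
    (h : ∀ i j, i ≠ j →
      μ j ^ 3 - μ i ^ 3 - 3 * μ i * (μ j ^ 2 - μ i ^ 2) = (μ j - μ i) * f i) :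
    (Set.range μ).ncard ≤ 2 := by
  have hf : ∀ i j, μ i ≠ μ j → f i = μ j ^ 2 - 2 * μ i * μ j - 2 * μ i ^ 2 :=
    fun i j hne => eq_of_cube_sub_eq_mul hne (h i j (ne_of_apply_ne μ hne))
  have midpoint : ∀ {i j k}, μ i ≠ μ j → μ i ≠ μ k → μ j ≠ μ k → μ j + μ k = 2 * μ i :=
    fun hij hik hjk => add_eq_two_mul_of_sq_sub_eq hjk
      (by linear_combination hf _ _ hik - hf _ _ hij)
  by_contra! hc
  obtain ⟨_, ⟨i, rfl⟩, _, ⟨j, rfl⟩, _, ⟨k, rfl⟩, hij, hik, hjk⟩ := (Set.two_lt_ncard).mp hc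
  have hi := midpoint hij hik hjk
  have hj := midpoint hij.symm hjk hik
  exact hij (by linarith)
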